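/- Let Γ be a countable discrete group, (X,μ) a standard probability space, and L a finite set of size k. Then for every finite family (A_p)_{p=1}^q of basic clopen cylinder sets A_p ⊆ L^Γ and every ε > 0 there is δ > 0 such that for all measure-preserving actions a, b of Γ on (X,μ) with d(a,b) < δ and every measurable φ: X → L there exists a measurable ψ: X → L with |(Φ_L^{φ,a})_*μ(A_p) − (Φ_L^{ψ,b})_*μ(A_p)| < ε for all p ≤ q. -/

import Mathlib

open MeasureTheory Filter Topology Set

/-- A measure-preserving action of a group `Γ` on a measure space `(X, μ)`. -/
structure MPAction (Γ : Type*) [Group Γ] (X : Type*) [MeasurableSpace X]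
    (μ : MeasureTheory.Measure X) where
  act : Γ → X → X
  measurePreserving_act : ∀ γ : Γ, MeasureTheory.MeasurePreserving (act γ) μ μ
  act_one : ∀ x, act 1 x = x
  act_mul : ∀ γ δ x, act (γ * δ) x = act γ (act δ x)

namespace MPAction

variable {Γ : Type*} [Group Γ] {X : Type*} [MeasurableSpace X] {μ : Measure X}
  {Y : Type*} [MeasurableSpace Y] {ν : Measure Y}
  {W : Type*} [MeasurableSpace W] {ρ : Measure W}

/-- Weak containment of measure-preserving actions. -/
def WeaklyContained (a : MPAction Γ X μ) (b : MPAction Γ Y ν) : Prop :=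
  ∀ (n : ℕ) (A : Fin n → Set X), (∀ i, MeasurableSet (A i)) →
    ∀ (F : Finset Γ) (ε : ℝ), 0 < ε →
      ∃ B : Fin n → Set Y, (∀ i, MeasurableSet (B i)) ∧
        ∀ γ ∈ F, ∀ i j : Fin n,
          |(μ (a.act γ '' A i ∩ A j)).toReal - (ν (b.act γ '' B i ∩ B j)).toReal| < ε

/-- Weak equivalence of measure-preserving actions. -/
def WeakEquiv (a : MPAction Γ X μ) (b : MPAction Γ Y ν) : Prop :=
  WeaklyContained a b ∧ WeaklyContained b a

/-- A finite measurable partition of the space. -/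
def IsPartition {k : ℕ} (A : Fin k → Set X) : Prop :=
  (∀ i, MeasurableSet (A i)) ∧ Pairwise (Function.onFun Disjoint A) ∧ (⋃ i, A i) = Set.univ

/-- The compact set `C_{n,k}(a) ⊆ [0,1]^{n × k × k}`: the closure of the collection of
matrices of measures `μ(γ_p^a A_q ∩ A_r)` over all measurable `k`-partitions, with respect
to the fixed enumeration `e` of the group. -/
noncomputable def Cnk (e : ℕ → Γ) (a : MPAction Γ X μ) (n k : ℕ) :
    Set ((Fin n × Fin k × Fin k) → ℝ) :=
  closure { v | ∃ A : Fin k → Set X, IsPartition A ∧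
    ∀ (p : Fin n) (q r : Fin k), v (p, q, r) = (μ (a.act (e p.1) '' A q ∩ A r)).toReal }

/-- The metric `d` on weak equivalence classes:
`d(a,b) = Σ_{n,k} 2^{-(n+k)} d_H(C_{n,k}(a), C_{n,k}(b))`. -/
noncomputable def dWE (e : ℕ → Γ) (a : MPAction Γ X μ) (b : MPAction Γ Y ν) : ℝ :=
  ∑' nk : ℕ × ℕ, (2 : ℝ) ^ (-(nk.1 : ℤ) - (nk.2 : ℤ)) *
    Metric.hausdorffDist (Cnk e a nk.1 nk.2) (Cnk e b nk.1 nk.2)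

section Mix

variable {ι : Type*} {Z : ι → Type*} [∀ i, MeasurableSpace (Z i)]

theorem measurable_sigmaMk' (i : ι) : Measurable (@Sigma.mk ι Z i) :=
  measurable_iff_le_map.2 (iInf_le _ i)

theorem measurable_of_sigma {δ : Type*} [MeasurableSpace δ] {f : Sigma Z → δ}
    (hf : ∀ i, Measurable (f ∘ Sigma.mk i)) : Measurable f := by
  intro s hs
  rw [Sigma.instMeasurableSpace, MeasurableSpace.measurableSet_iInf]
  intro i
  exact hf i hs

/-- The measure `Σ_i λ_i ν_i` on the disjoint union `⊔_i Z_i`. -/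
noncomputable def mixMeasure (lam : ι → ℝ) (νs : ∀ i, Measure (Z i)) :
    Measure ((i : ι) × Z i) :=
  Measure.sum fun i => ENNReal.ofReal (lam i) • (νs i).map (Sigma.mk i)

instance mixMeasure.instSFinite [Countable ι] (lam : ι → ℝ) (νs : ∀ i, Measure (Z i))
    [∀ i, SFinite (νs i)] : SFinite (mixMeasure lam νs) := by
  unfold mixMeasure
  infer_instance

/-- The convex combination `Σ_i λ_i a_i` of measure-preserving actions, acting on the
disjoint union `⊔_i Z_i` with the measure `Σ_i λ_i ν_i`. -/
noncomputable def mix [Countable ι] {νs : ∀ i, Measure (Z i)} (lam : ι → ℝ)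
    (a : ∀ i, MPAction Γ (Z i) (νs i)) : MPAction Γ ((i : ι) × Z i) (mixMeasure lam νs) where
  act γ p := ⟨p.1, (a p.1).act γ p.2⟩
  measurePreserving_act γ := by
    have hmeas : Measurable fun p : (i : ι) × Z i => (⟨p.1, (a p.1).act γ p.2⟩ : (i : ι) × Z i) := by
      apply measurable_of_sigma
      intro i
      exact (measurable_sigmaMk' i).comp ((a i).measurePreserving_act γ).measurable
    refine ⟨hmeas, ?_⟩
    refine Measure.ext fun s hs => ?_
    rw [Measure.map_apply hmeas hs]
    rw [mixMeasure, Measure.sum_apply _ (hmeas hs), Measure.sum_apply _ hs]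
    congr 1
    funext i
    rw [Measure.smul_apply, Measure.smul_apply,
      Measure.map_apply (measurable_sigmaMk' i) (hmeas hs),
      Measure.map_apply (measurable_sigmaMk' i) hs]
    congr 1
    have hpre : (Sigma.mk i) ⁻¹'
        ((fun p : (i : ι) × Z i => (⟨p.1, (a p.1).act γ p.2⟩ : (i : ι) × Z i)) ⁻¹' s)
        = ((a i).act γ) ⁻¹' (Sigma.mk i ⁻¹' s) := rfl
    rw [hpre]
    exact ((a i).measurePreserving_act γ).measure_preimage
      ((measurable_sigmaMk' i) hs).nullMeasurableSet
  act_one p := by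
    cases p with
    | mk i x => simp only [(a i).act_one]
  act_mul γ δ p := by
    cases p with
    | mk i x => simp only [(a i).act_mul]

end Mix

/-- The binary convex combination `t a + (1 - t) b` of two actions on `(X, μ)`,
realized on the disjoint union of two copies of `X` carrying measures `tμ` and `(1-t)μ`. -/
noncomputable def convComb (t : ℝ) (a b : MPAction Γ X μ) :
    MPAction Γ ((_ : Fin 2) × X) (mixMeasure ![t, 1 - t] fun _ => μ) :=
  mix (νs := fun _ => μ) ![t, 1 - t] ![a, b]

/-- The trivial action. -/
def trivAction (Γ : Type*) [Group Γ] (Y : Type*) [MeasurableSpace Y] (ν : Measure Y) :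
    MPAction Γ Y ν where
  act _ y := y
  measurePreserving_act _ := MeasurePreserving.id ν
  act_one _ := rfl
  act_mul _ _ _ := rfl

/-- The product of two measure-preserving actions. -/
noncomputable def prodAction [SFinite μ] [SFinite ν] (a : MPAction Γ X μ) (b : MPAction Γ Y ν) :
    MPAction Γ (X × Y) (μ.prod ν) where
  act γ := Prod.map (a.act γ) (b.act γ)
  measurePreserving_act γ := (a.measurePreserving_act γ).prod (b.measurePreserving_act γ)
  act_one p := by simp [Prod.map, a.act_one, b.act_one]
  act_mul γ δ p := by simp [Prod.map, a.act_mul, b.act_mul]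

/-- Stable weak containment: `a ≺_s b` iff `a ≺ ι × b`, where `ι` is the trivial action of `Γ`
on the standard probability space `(X₀, μ₀)`. -/
def StableWeaklyContained {X₀ : Type*} [MeasurableSpace X₀] (μ₀ : Measure X₀) [SFinite μ₀]
    (a : MPAction Γ W ρ) (b : MPAction Γ Y ν) [SFinite ν] : Prop :=
  WeaklyContained a (prodAction (trivAction Γ X₀ μ₀) b)

/-- Stable weak equivalence. -/
def StableWeakEquiv {X₀ : Type*} [MeasurableSpace X₀] (μ₀ : Measure X₀) [SFinite μ₀]
    (a : MPAction Γ W ρ) [SFinite ρ] (b : MPAction Γ Y ν) [SFinite ν] : Prop :=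
  StableWeaklyContained μ₀ a b ∧ StableWeaklyContained μ₀ b a

/-- An action is ergodic if every strictly invariant measurable set is null or conull. -/
def IsErgodicAction (a : MPAction Γ X μ) : Prop :=
  ∀ A : Set X, MeasurableSet A → (∀ γ, a.act γ ⁻¹' A = A) → μ A = 0 ∨ μ Aᶜ = 0

/-- An action is (essentially) free if almost every point has trivial stabilizer. -/
def IsFreeAction (a : MPAction Γ X μ) : Prop :=
  ∀ᵐ x ∂μ, ∀ γ : Γ, γ ≠ 1 → a.act γ x ≠ x

end MPAction

section Cylinders

/-- The Cantor set. -/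
abbrev Cantor : Type := ℕ → Bool

/-- Basic clopen subsets of the Cantor set: sets determined by finitely many coordinates. -/
def cantorBasic : Set (Set Cantor) :=
  { B | ∃ (s : Finset ℕ) (σ : ℕ → Bool), B = {x : Cantor | ∀ n ∈ s, x n = σ n} }

/-- The clopen cylinder subsets of `K^Γ` of the form `π_F⁻¹(Π_{γ ∈ F} A_γ)` with `F ⊆ Γ`
finite and each `A_γ` a basic clopen subset of the Cantor set `K`. -/
def KCyl (Γ : Type*) : Set (Set (Γ → Cantor)) :=
  { C | ∃ (F : Finset Γ) (B : Γ → Set Cantor),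
      (∀ γ ∈ F, B γ ∈ cantorBasic) ∧ C = {f | ∀ γ ∈ F, f γ ∈ B γ} }

/-- The basic clopen cylinder subsets of `L^Γ` for a finite set `L`:
sets of the form `∩_{γ ∈ F} π_γ⁻¹({j_γ})`. -/
def LCyl (Γ : Type*) (L : Type*) : Set (Set (Γ → L)) :=
  { C | ∃ (F : Finset Γ) (j : Γ → L), C = {f | ∀ γ ∈ F, f γ = j γ} }

/-- `A` enumerates the collection of sets `S`. -/
def Enumerates {M : Type*} (A : ℕ → Set M) (S : Set (Set M)) : Prop :=
  (∀ i, A i ∈ S) ∧ ∀ C ∈ S, ∃ i, A i = C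

/-- The compatible metric `δ(ν,ρ) = Σ_i 2^{-(i+1)} |ν(A_i) - ρ(A_i)|` on the space of
probability measures, determined by an enumeration `A` of a generating family of sets. -/
noncomputable def deltaEnum {M : Type*} [MeasurableSpace M] (A : ℕ → Set M)
    (m m' : MeasureTheory.Measure M) : ℝ :=
  ∑' i : ℕ, (2 : ℝ) ^ (-(i : ℤ) - 1) * |(m (A i)).toReal - (m' (A i)).toReal|

/-- Convergence of a sequence of sets of measures to a set of measures in the Hausdorff
(metric) sense, with respect to a metric `δ`: for every `ε > 0`, eventually each of the two
sets is contained in the `ε`-neighbourhood of the other.  (Equivalently, the closures converge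
in the Hausdorff metric topology on the hyperspace of compact subsets.) -/
def HausTendsto {M : Type*} [MeasurableSpace M]
    (δ : MeasureTheory.Measure M → MeasureTheory.Measure M → ℝ)
    (En : ℕ → Set (MeasureTheory.Measure M)) (E : Set (MeasureTheory.Measure M)) : Prop :=
  ∀ ε : ℝ, 0 < ε → ∃ N : ℕ, ∀ n ≥ N,
    (∀ m ∈ En n, ∃ m' ∈ E, δ m m' < ε) ∧ (∀ m' ∈ E, ∃ m ∈ En n, δ m m' < ε)

variable {Γ : Type*} [Group Γ] {X : Type*} [MeasurableSpace X] {μ : MeasureTheory.Measure X}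

/-- The map `Φ^{φ,a} : X → S^Γ`, `Φ^{φ,a}(x)(γ) = φ((γ⁻¹)^a x)`, associated to an observable
`φ : X → S` and an action `a`. -/
def MPAction.phiMap (a : MPAction Γ X μ) {S : Type*} (φ : X → S) : X → (Γ → S) :=
  fun x γ => φ (a.act γ⁻¹ x)

/-- The set `E(a,S) = {(Φ^{φ,a})_* μ : φ : X → S measurable}` of shift-invariant measures
on `S^Γ` associated to the action `a`. -/
noncomputable def MPAction.ESet (a : MPAction Γ X μ) (S : Type*) [MeasurableSpace S] :
    Set (MeasureTheory.Measure (Γ → S)) :=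
  { m | ∃ φ : X → S, Measurable φ ∧ m = μ.map (a.phiMap φ) }

end Cylinders

/-
Choose a finite window `F ∋ 1` containing the supports of the cylinders, and let `B_w`,
`w ∈ L^F`, be the pieces of the partition of `X` by the `a`-name `x ↦ (φ((γ⁻¹)^a x))_{γ ∈ F}`.
For `n` with `F ⊆ {γ_0, …, γ_{n-1}}` and `K = |L^F|`, a small `d(a, b)` makes `C_{n,K}(a)` and
`C_{n,K}(b)` Hausdorff-close, so some partition `(C_w)` of `X` has statistics
`μ(γ^b C_w ∩ C_{w'})`, `γ ∈ F`, close to those of `(B_w)`. Put `ψ(x) = w(1)` for `x ∈ C_w`.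
Since `γ^a B_{w'} ∩ B_w = ∅` whenever `w(γ) ≠ w'(1)`, the sets `γ^b C_{w'} ∩ C_w` are then small,
and off their union the `b`-name of `ψ` at `x` is the label of the piece containing `x`. A
cylinder measure is a sum of `μ(B_w)` for `(φ, a)`, and up to that union the same sum of
`μ(C_w)` for `(ψ, b)`.
-/

section Preimage

variable {α W : Type*} [MeasurableSpace α] {μ : Measure α} [IsFiniteMeasure μ]
  [MeasurableSpace W] {f g : α → W}

theorem abs_measureReal_preimage_sub_le_measureReal_ne (hf : Measurable f) (hg : Measurable g)
    {S : Set W} (hS : MeasurableSet S) :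
    |μ.real (f ⁻¹' S) - μ.real (g ⁻¹' S)| ≤ μ.real {x | f x ≠ g x} := by
  refine (abs_measureReal_sub_le_measureReal_symmDiff (hf hS).nullMeasurableSet
    (hg hS).nullMeasurableSet).trans (measureReal_mono ?_ (measure_ne_top _ _))
  rintro x (⟨hfx, hgx⟩ | ⟨hgx, hfx⟩) hfg
  · exact hgx (show g x ∈ S from hfg ▸ hfx)
  · exact hfx (show f x ∈ S from hfg ▸ hgx)

theorem abs_measureReal_preimage_sub_le_of_fibers [MeasurableSingletonClass W] [Finite W]
    (hf : Measurable f) (hg : Measurable g) {η : ℝ}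
    (hfg : ∀ w, |μ.real (f ⁻¹' {w}) - μ.real (g ⁻¹' {w})| ≤ η) (S : Set W) :
    |μ.real (f ⁻¹' S) - μ.real (g ⁻¹' S)| ≤ Nat.card W * η := by
  classical
  have : Fintype W := Fintype.ofFinite W
  rw [← S.coe_toFinset,
    ← sum_measureReal_preimage_singleton _ fun w _ => hf (measurableSet_singleton w),
    ← sum_measureReal_preimage_singleton _ fun w _ => hg (measurableSet_singleton w),
    ← Finset.sum_sub_distrib]
  calc _ ≤ ∑ w ∈ S.toFinset, |μ.real (f ⁻¹' {w}) - μ.real (g ⁻¹' {w})| :=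
        Finset.abs_sum_le_sum_abs _ _
    _ ≤ ∑ w, |μ.real (f ⁻¹' {w}) - μ.real (g ⁻¹' {w})| :=
        Finset.sum_le_sum_of_subset_of_nonneg (Finset.subset_univ _) fun _ _ _ => abs_nonneg _
    _ ≤ Finset.univ.card • η := Finset.sum_le_card_nsmul _ _ _ fun w _ => hfg w
    _ = Nat.card W * η := by simp [Nat.card_eq_fintype_card]

end Preimage

open Metric

theorem Metric.hausdorffDist_le_of_subset_closedBall {α : Type*} [PseudoMetricSpace α]
    {s t : Set α} {x : α} {r : ℝ} (hr : 0 ≤ r) (hs : s ⊆ closedBall x r)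
    (ht : t ⊆ closedBall x r) : hausdorffDist s t ≤ 2 * r := by
  rcases s.eq_empty_or_nonempty with rfl | hs₀
  · simpa using hr
  rcases t.eq_empty_or_nonempty with rfl | ht₀
  · simpa using hr
  calc hausdorffDist s t ≤ diam (s ∪ t) := hausdorffDist_le_diam hs₀
        (isBounded_closedBall.subset hs) ht₀ (isBounded_closedBall.subset ht)
    _ ≤ diam (closedBall x r) := diam_mono (Set.union_subset hs ht) isBounded_closedBall
    _ ≤ 2 * r := diam_closedBall hr

theorem summable_two_zpow_neg_sub :
    Summable fun nk : ℕ × ℕ => (2 : ℝ) ^ (-(nk.1 : ℤ) - nk.2) := by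
  have hgeom := summable_geometric_two
  refine (Summable.mul_of_nonneg hgeom hgeom (fun _ => by positivity)
    (fun _ => by positivity)).congr fun nk => ?_
  rw [zpow_sub₀ (two_ne_zero' ℝ), zpow_neg, zpow_natCast, zpow_natCast, one_div, inv_pow, inv_pow,
    div_eq_mul_inv]

theorem exists_finset_eq_cylinder_of_mem_LCyl {Γ L ι : Type*} [Finite ι]
    {A : ι → Set (Γ → L)} (hA : ∀ i, A i ∈ LCyl Γ L) (F₀ : Finset Γ) :
    ∃ F : Finset Γ, F₀ ⊆ F ∧ ∀ i, ∃ S : Set (F → L), A i = cylinder F S := by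
  classical
  have : Fintype ι := Fintype.ofFinite ι
  choose G j hG using hA
  refine ⟨F₀ ∪ Finset.univ.biUnion G, Finset.subset_union_left, fun i =>
    ⟨{w | ∀ γ : (F₀ ∪ Finset.univ.biUnion G : Finset Γ), (γ : Γ) ∈ G i → w γ = j i γ}, ?_⟩⟩
  have hGF : G i ⊆ F₀ ∪ Finset.univ.biUnion G :=
    (Finset.subset_biUnion_of_mem G (Finset.mem_univ i)).trans Finset.subset_union_right
  rw [hG i]
  ext f
  exact ⟨fun hf γ hγ => hf γ hγ, fun hf γ hγ => hf ⟨γ, hGF hγ⟩ hγ⟩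

theorem Function.Surjective.exists_forall_mem_exists_fin_eq {Γ : Type*} {e : ℕ → Γ}
    (he : Function.Surjective e) (F : Finset Γ) : ∃ n, ∀ γ ∈ F, ∃ p : Fin n, e p = γ := by
  classical
  obtain ⟨n, hn⟩ := Finset.exists_nat_subset_range (F.image (Function.surjInv he))
  exact ⟨n, fun γ hγ => ⟨⟨_, Finset.mem_range.1 (hn (Finset.mem_image_of_mem _ hγ))⟩,
    Function.surjInv_eq he γ⟩⟩

namespace MPAction

variable {Γ : Type*} [Group Γ] {X : Type*} [MeasurableSpace X] {μ : Measure X}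
  {Y : Type*} [MeasurableSpace Y] {ν : Measure Y}

section Action

variable (a : MPAction Γ X μ)

theorem act_inv_act (γ : Γ) (x : X) : a.act γ⁻¹ (a.act γ x) = x := by
  rw [← a.act_mul, inv_mul_cancel, a.act_one]

theorem act_act_inv (γ : Γ) (x : X) : a.act γ (a.act γ⁻¹ x) = x := by
  rw [← a.act_mul, mul_inv_cancel, a.act_one]

theorem image_act (γ : Γ) (s : Set X) : a.act γ '' s = a.act γ⁻¹ ⁻¹' s :=
  congrFun (Set.image_eq_preimage_of_inverse (a.act_inv_act γ) (a.act_act_inv γ)) s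

theorem image_act_one (s : Set X) : a.act 1 '' s = s := by
  rw [show a.act 1 = id from funext a.act_one, Set.image_id]

theorem measurable_phiMap {L : Type*} [MeasurableSpace L] {φ : X → L} (hφ : Measurable φ) :
    Measurable (a.phiMap φ) :=
  measurable_pi_lambda _ fun γ => hφ.comp (a.measurePreserving_act γ⁻¹).measurable

end Action

section Partition

theorem isPartition_preimage_singleton {k : ℕ} {f : X → Fin k} (hf : Measurable f) :
    IsPartition fun i => f ⁻¹' {i} :=
  ⟨fun i => hf (measurableSet_singleton i),
    fun _ _ hij => Disjoint.preimage f (Set.disjoint_singleton.2 hij),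
    Set.eq_univ_of_forall fun x => Set.mem_iUnion.2 ⟨f x, rfl⟩⟩

theorem IsPartition.exists_measurable_preimage_singleton_eq {k : ℕ} {C : Fin k → Set X}
    (hC : IsPartition C) : ∃ g : X → Fin k, Measurable g ∧ ∀ i, g ⁻¹' {i} = C i := by
  obtain ⟨hmeas, hdisj, hcover⟩ := hC
  have hex : ∀ x, ∃ i, x ∈ C i := fun x => Set.mem_iUnion.1 (hcover ▸ Set.mem_univ x)
  choose g hg using hex
  have hpre : ∀ i, g ⁻¹' {i} = C i := fun i => Set.ext fun x =>
    ⟨fun hx => hx ▸ hg x, fun hx => by_contra fun hne => Set.disjoint_left.1 (hdisj hne) (hg x) hx⟩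
  exact ⟨g, measurable_to_countable' fun i => hpre i ▸ hmeas i, hpre⟩

end Partition

section Profile

variable (e : ℕ → Γ)

/-- The point of `C_{n,k}(a)` given by the partition into the fibres of `f`. -/
noncomputable def profile (a : MPAction Γ X μ) (n : ℕ) {k : ℕ} (f : X → Fin k) :
    Fin n × Fin k × Fin k → ℝ :=
  fun v => μ.real (a.act (e v.1) '' (f ⁻¹' {v.2.1}) ∩ f ⁻¹' {v.2.2})

theorem profile_mem_Cnk (a : MPAction Γ X μ) (n : ℕ) {k : ℕ} {f : X → Fin k}
    (hf : Measurable f) : profile e a n f ∈ Cnk e a n k :=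
  subset_closure ⟨_, isPartition_preimage_singleton hf, fun _ _ _ => rfl⟩

theorem Cnk_subset_closedBall [IsProbabilityMeasure μ] (a : MPAction Γ X μ) (n k : ℕ) :
    Cnk e a n k ⊆ closedBall 0 1 := by
  refine closure_minimal ?_ isClosed_closedBall
  rintro v ⟨A, -, hv⟩
  rw [mem_closedBall, dist_pi_le_iff zero_le_one]
  rintro ⟨p, q, r⟩
  rw [hv p q r, Pi.zero_apply, Real.dist_eq, sub_zero, abs_of_nonneg ENNReal.toReal_nonneg]
  exact measureReal_le_one

theorem exists_profile_dist_lt [IsProbabilityMeasure μ] [IsProbabilityMeasure ν]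
    {a : MPAction Γ X μ} {b : MPAction Γ Y ν} {n k : ℕ} {η : ℝ}
    (hd : hausdorffDist (Cnk e a n k) (Cnk e b n k) < η) {f : X → Fin k} (hf : Measurable f) :
    ∃ g : Y → Fin k, Measurable g ∧ dist (profile e a n f) (profile e b n g) < η := by
  obtain ⟨x⟩ := nonempty_of_isProbabilityMeasure μ
  have hfin : hausdorffEDist (Cnk e a n k) (Cnk e b n k) ≠ ⊤ :=
    hausdorffEDist_ne_top_of_nonempty_of_bounded ⟨_, profile_mem_Cnk e a n hf⟩
      ⟨_, profile_mem_Cnk e b n (measurable_const (a := f x))⟩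
      (isBounded_closedBall.subset (Cnk_subset_closedBall e a n k))
      (isBounded_closedBall.subset (Cnk_subset_closedBall e b n k))
  obtain ⟨v, hv, hdv⟩ := exists_dist_lt_of_hausdorffDist_lt (profile_mem_Cnk e a n hf) hd hfin
  obtain ⟨w, ⟨C, hC, hw⟩, hvw⟩ := mem_closure_iff.1 hv _ (sub_pos.2 hdv)
  obtain ⟨g, hg, hgC⟩ := hC.exists_measurable_preimage_singleton_eq
  have hgw : profile e b n g = w := funext fun ⟨p, q, r⟩ => by
    rw [hw p q r, profile, hgC, hgC]; rfl
  refine ⟨g, hg, ?_⟩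
  rw [hgw]
  linarith [dist_triangle (profile e a n f) v w]

theorem exists_measurable_close_of_hausdorffDist_lt [IsProbabilityMeasure μ]
    [IsProbabilityMeasure ν] {a : MPAction Γ X μ} {b : MPAction Γ Y ν} {n k : ℕ} {η : ℝ}
    {W : Type*} [MeasurableSpace W] [MeasurableSingletonClass W] (E : W ≃ Fin k) {s : Set Γ}
    (hs : ∀ γ ∈ s, ∃ p : Fin n, e p = γ) (hd : hausdorffDist (Cnk e a n k) (Cnk e b n k) < η)
    {f : X → W} (hf : Measurable f) :
    ∃ g : Y → W, Measurable g ∧ ∀ γ ∈ s, ∀ w w' : W,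
      |μ.real (a.act γ '' (f ⁻¹' {w}) ∩ f ⁻¹' {w'}) -
        ν.real (b.act γ '' (g ⁻¹' {w}) ∩ g ⁻¹' {w'})| < η := by
  have : Countable W := E.injective.countable
  obtain ⟨g, hg, hdist⟩ :=
    exists_profile_dist_lt e hd ((measurable_of_countable E).comp hf)
  refine ⟨E.symm ∘ g, (measurable_of_countable E.symm).comp hg, fun γ hγ w w' => ?_⟩
  obtain ⟨p, rfl⟩ := hs γ hγ
  have hpre_a : ∀ w, (E ∘ f) ⁻¹' {E w} = f ⁻¹' {w} := fun w =>
    Set.ext fun _ => E.injective.eq_iff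
  have hpre_b : ∀ w, (E.symm ∘ g) ⁻¹' {w} = g ⁻¹' {E w} := fun w =>
    Set.ext fun _ => E.symm_apply_eq
  have hcoord := (dist_le_pi_dist _ _ (p, E w, E w')).trans_lt hdist
  rw [Real.dist_eq, profile, profile, hpre_a, hpre_a] at hcoord
  rwa [hpre_b, hpre_b]

end Profile

section Distance

variable [IsProbabilityMeasure μ] [IsProbabilityMeasure ν] (e : ℕ → Γ)
  (a : MPAction Γ X μ) (b : MPAction Γ Y ν)

theorem two_zpow_mul_hausdorffDist_Cnk_le_dWE (n k : ℕ) :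
    (2 : ℝ) ^ (-(n : ℤ) - k) * hausdorffDist (Cnk e a n k) (Cnk e b n k) ≤ dWE e a b := by
  have hdist : ∀ n k, hausdorffDist (Cnk e a n k) (Cnk e b n k) ≤ 2 := fun n k => by
    simpa using hausdorffDist_le_of_subset_closedBall zero_le_one
      (Cnk_subset_closedBall e a n k) (Cnk_subset_closedBall e b n k)
  have hnonneg : ∀ nk : ℕ × ℕ, 0 ≤ (2 : ℝ) ^ (-(nk.1 : ℤ) - nk.2) *
      hausdorffDist (Cnk e a nk.1 nk.2) (Cnk e b nk.1 nk.2) :=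
    fun _ => mul_nonneg (by positivity) hausdorffDist_nonneg
  refine (Summable.of_nonneg_of_le hnonneg (fun nk => ?_)
    (summable_two_zpow_neg_sub.mul_right 2)).le_tsum (n, k) fun nk _ => hnonneg nk
  exact mul_le_mul_of_nonneg_left (hdist nk.1 nk.2) (by positivity)

theorem hausdorffDist_Cnk_lt_of_dWE_lt {n k : ℕ} {η : ℝ}
    (h : dWE e a b < (2 : ℝ) ^ (-(n : ℤ) - k) * η) :
    hausdorffDist (Cnk e a n k) (Cnk e b n k) < η :=
  lt_of_mul_lt_mul_left ((two_zpow_mul_hausdorffDist_Cnk_le_dWE e a b n k).trans_lt h)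
    (by positivity)

end Distance

section Labelling

variable {L : Type*}

theorem image_act_preimage_restrict_inter_eq_empty (a : MPAction Γ X μ) {F : Finset Γ}
    (h1 : (1 : Γ) ∈ F) (φ : X → L) {γ : F} {w w' : F → L} (h : w γ ≠ w' ⟨1, h1⟩) :
    a.act γ '' ((F.restrict ∘ a.phiMap φ) ⁻¹' {w'}) ∩ (F.restrict ∘ a.phiMap φ) ⁻¹' {w} = ∅ := by
  rw [image_act, Set.eq_empty_iff_forall_notMem]
  rintro x ⟨hx', hx⟩
  apply h
  rw [← Set.mem_singleton_iff.1 hx, ← Set.mem_singleton_iff.1 hx']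
  simp [Finset.restrict, phiMap, a.act_one]

/-- A labelling `c` whose labels are almost never contradicted along the action `b` is, up to a
small set, the `b`-name of the observable `x ↦ c x 1`. -/
theorem measureReal_restrict_phiMap_ne_le [IsFiniteMeasure μ] [Finite L] (b : MPAction Γ X μ)
    {F : Finset Γ} (h1 : (1 : Γ) ∈ F) {c : X → (F → L)} {η : ℝ} (hη : 0 ≤ η)
    (hc : ∀ (γ : F) (w w' : F → L), w γ ≠ w' ⟨1, h1⟩ →
      μ.real (b.act γ '' (c ⁻¹' {w'}) ∩ c ⁻¹' {w}) ≤ η) :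
    μ.real {x | F.restrict (b.phiMap (fun y => c y ⟨1, h1⟩) x) ≠ c x} ≤
      Nat.card F * Nat.card (F → L) ^ 2 * η := by
  classical
  have : Fintype L := Fintype.ofFinite L
  set T : F × (F → L) × (F → L) → Set X := fun t => b.act t.1 '' (c ⁻¹' {t.2.2}) ∩ c ⁻¹' {t.2.1}
  set bad := Finset.univ.filter fun t : F × (F → L) × (F → L) => t.2.1 t.1 ≠ t.2.2 ⟨1, h1⟩
  have hsub : {x | F.restrict (b.phiMap (fun y => c y ⟨1, h1⟩) x) ≠ c x} ⊆ ⋃ t ∈ bad, T t := by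
    intro x hx
    obtain ⟨γ, hγ⟩ := Function.ne_iff.1 hx
    refine Set.mem_biUnion (x := (γ, c x, c (b.act γ⁻¹ x)))
      (Finset.mem_filter.2 ⟨Finset.mem_univ _, Ne.symm hγ⟩) ⟨?_, rfl⟩
    exact ⟨b.act γ⁻¹ x, rfl, b.act_act_inv γ x⟩
  calc _ ≤ μ.real (⋃ t ∈ bad, T t) := measureReal_mono hsub (measure_ne_top _ _)
    _ ≤ ∑ t ∈ bad, μ.real (T t) := measureReal_biUnion_finset_le _ _
    _ ≤ bad.card • η :=
      Finset.sum_le_card_nsmul _ _ _ fun t ht => hc _ _ _ (Finset.mem_filter.1 ht).2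
    _ ≤ _ := by
      have hcard : bad.card ≤ Nat.card F * Nat.card (F → L) ^ 2 := by
        calc bad.card ≤ Finset.univ.card := Finset.card_le_univ bad
          _ = _ := by simp [Nat.card_eq_fintype_card, sq]
      rw [nsmul_eq_mul]
      gcongr
      exact_mod_cast hcard

theorem abs_measureReal_preimage_cylinder_sub_le [IsFiniteMeasure μ] [MeasurableSpace L]
    [MeasurableSingletonClass L] [Finite L] (a b : MPAction Γ X μ) {F : Finset Γ}
    (h1 : (1 : Γ) ∈ F) {φ : X → L} (hφ : Measurable φ) {c : X → (F → L)} (hc : Measurable c)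
    {η : ℝ} (hη : 0 ≤ η)
    (hclose : ∀ γ ∈ F, ∀ w w' : F → L,
      |μ.real (a.act γ '' ((F.restrict ∘ a.phiMap φ) ⁻¹' {w}) ∩
          (F.restrict ∘ a.phiMap φ) ⁻¹' {w'}) -
        μ.real (b.act γ '' (c ⁻¹' {w}) ∩ c ⁻¹' {w'})| ≤ η)
    (S : Set (F → L)) :
    |μ.real (a.phiMap φ ⁻¹' cylinder F S) -
        μ.real (b.phiMap (fun x => c x ⟨1, h1⟩) ⁻¹' cylinder F S)| ≤
      (Nat.card (F → L) + Nat.card F * Nat.card (F → L) ^ 2) * η := by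
  set u := F.restrict ∘ a.phiMap φ
  set v := F.restrict ∘ b.phiMap (fun x => c x ⟨1, h1⟩)
  have hu : Measurable u := (Finset.measurable_restrict F).comp (a.measurable_phiMap hφ)
  have hv : Measurable v := (Finset.measurable_restrict F).comp
    (b.measurable_phiMap ((measurable_pi_apply _).comp hc))
  have hfibers : ∀ w, |μ.real (u ⁻¹' {w}) - μ.real (c ⁻¹' {w})| ≤ η := fun w => by
    simpa only [image_act_one, Set.inter_self] using hclose 1 h1 w w
  have hbad : μ.real {x | v x ≠ c x} ≤ Nat.card F * Nat.card (F → L) ^ 2 * η :=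
    measureReal_restrict_phiMap_ne_le b h1 hη fun γ w w' h => by
      have hempty : a.act γ '' (u ⁻¹' {w'}) ∩ u ⁻¹' {w} = ∅ :=
        image_act_preimage_restrict_inter_eq_empty a h1 φ h
      simpa [hempty, abs_of_nonneg measureReal_nonneg] using hclose γ γ.2 w' w
  calc |μ.real (u ⁻¹' S) - μ.real (v ⁻¹' S)|
      ≤ |μ.real (u ⁻¹' S) - μ.real (c ⁻¹' S)| + |μ.real (c ⁻¹' S) - μ.real (v ⁻¹' S)| :=
        abs_sub_le _ _ _
    _ ≤ Nat.card (F → L) * η + Nat.card F * Nat.card (F → L) ^ 2 * η := by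
        rw [abs_sub_comm (μ.real (c ⁻¹' S))]
        exact add_le_add (abs_measureReal_preimage_sub_le_of_fibers hu hc hfibers S)
          ((abs_measureReal_preimage_sub_le_measureReal_ne hv hc S.toFinite.measurableSet).trans
            hbad)
    _ = _ := by ring

end Labelling

end MPAction

theorem cylinder_measure_perturbation_general
    (Γ : Type) [Group Γ]
    (X : Type) [MeasurableSpace X]
    (μ : Measure X) [IsProbabilityMeasure μ]
    (e : ℕ → Γ) (he : Function.Surjective e)
    (k : ℕ) (q : ℕ) (A : Fin q → Set (Γ → Fin k))
    (hA : ∀ p, A p ∈ LCyl Γ (Fin k))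
    (ε : ℝ) (hε : 0 < ε) :
    ∃ δ : ℝ, 0 < δ ∧ ∀ a b : MPAction Γ X μ, MPAction.dWE e a b < δ →
      ∀ φ : X → Fin k, Measurable φ →
        ∃ ψ : X → Fin k, Measurable ψ ∧ ∀ p : Fin q,
          |((μ.map (a.phiMap φ)) (A p)).toReal - ((μ.map (b.phiMap ψ)) (A p)).toReal| < ε := by
  obtain ⟨F, hF₁, hAF⟩ := exists_finset_eq_cylinder_of_mem_LCyl hA {1}
  have h1 : (1 : Γ) ∈ F := hF₁ (Finset.mem_singleton_self 1)
  obtain ⟨n, hn⟩ := he.exists_forall_mem_exists_fin_eq F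
  set K := Nat.card (F → Fin k)
  set M : ℝ := K + Nat.card F * K ^ 2
  have hη : 0 < ε / (M + 1) := by positivity
  refine ⟨2 ^ (-(n : ℤ) - K) * (ε / (M + 1)), by positivity, fun a b hab φ hφ => ?_⟩
  obtain ⟨c, hc, hclose⟩ := MPAction.exists_measurable_close_of_hausdorffDist_lt e
    (Finite.equivFin _) hn (MPAction.hausdorffDist_Cnk_lt_of_dWE_lt e a b hab)
    ((Finset.measurable_restrict F).comp (a.measurable_phiMap hφ))
  have hψ : Measurable fun x => c x ⟨1, h1⟩ := (measurable_pi_apply _).comp hc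
  refine ⟨fun x => c x ⟨1, h1⟩, hψ, fun p => ?_⟩
  obtain ⟨S, hAS⟩ := hAF p
  rw [hAS]
  have hS := S.toFinite.measurableSet.cylinder (α := fun _ : Γ => Fin k) F
  rw [Measure.map_apply (a.measurable_phiMap hφ) hS, Measure.map_apply (b.measurable_phiMap hψ) hS]
  calc _ ≤ M * (ε / (M + 1)) :=
        MPAction.abs_measureReal_preimage_cylinder_sub_le a b h1 hφ hc hη.le
          (fun γ hγ w w' => (hclose γ hγ w w').le) S
    _ < ε := by
      rw [mul_div_assoc', div_lt_iff₀ (by positivity)]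
      linarith

/-- Let `L` be a finite set of size `k` (modelled as `Fin k`).  For every
finite family `(A_p)_{p ≤ q}` of basic clopen cylinder subsets of `L^Γ` and every `ε > 0`
there is `δ > 0` such that whenever `a, b` are measure-preserving actions of `Γ` on `(X,μ)`
with `d(a,b) < δ`, for every measurable `φ : X → L` there is a measurable `ψ : X → L` with
`|(Φ_L^{φ,a})_*μ(A_p) − (Φ_L^{ψ,b})_*μ(A_p)| < ε` for all `p ≤ q`. -/
theorem cylinder_measure_perturbation
    (Γ : Type) [Group Γ] [Countable Γ]
    (X : Type) [MeasurableSpace X] [StandardBorelSpace X]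
    (μ : Measure X) [IsProbabilityMeasure μ] [NullSingletonClass μ]
    (e : ℕ → Γ) (he : Function.Surjective e)
    (k : ℕ) (q : ℕ) (A : Fin q → Set (Γ → Fin k))
    (hA : ∀ p, A p ∈ LCyl Γ (Fin k))
    (ε : ℝ) (hε : 0 < ε) :
    ∃ δ : ℝ, 0 < δ ∧ ∀ a b : MPAction Γ X μ, MPAction.dWE e a b < δ →
      ∀ φ : X → Fin k, Measurable φ →
        ∃ ψ : X → Fin k, Measurable ψ ∧ ∀ p : Fin q,
          |((μ.map (a.phiMap φ)) (A p)).toReal - ((μ.map (b.phiMap ψ)) (A p)).toReal| < ε :=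
  cylinder_measure_perturbation_general Γ X μ e he k q A hA ε hε
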